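/- Fix n ≥ 1 and 1 ≤ r ≤ n. The number of pairs (X, x), where X = (T_1,…,T_k) is an ordered set partition of an n-element set and x is an element of the r-th block T_r (so in particular k ≥ r), equals n · ∑_{i=r}^{n} (i−1)! · S(n,i). Equivalently, the probability that a uniformly random element of a uniformly random ordered set partition of an n-element set has rank r is P_{n,r} = (1/B_n) ∑_{i=r}^{n} (i−1)! S(n,i). -/

import Mathlib

open Finset PowerSeries Filter Nat

/-- `L` is an ordered set partition of the finite set `S`: a finite sequence of pairwise
disjoint nonempty subsets of `S` whose union is `S`. -/
def IsOrderedSetPartition {α : Type*} [DecidableEq α] (S : Finset α) (L : List (Finset α)) :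
    Prop :=
  (∀ T ∈ L, T ≠ ∅) ∧ L.Pairwise Disjoint ∧ L.foldr (· ∪ ·) ∅ = S

/-- The type of ordered set partitions of the finite set `S`. -/
def OrderedSetPartition {α : Type*} [DecidableEq α] (S : Finset α) :=
  {L : List (Finset α) // IsOrderedSetPartition S L}

/-- The ordered Bell number `B n`: the number of ordered set partitions of an `n`-element set. -/
noncomputable def orderedBell (n : ℕ) : ℕ :=
  Nat.card (OrderedSetPartition (Finset.univ : Finset (Fin n)))

/-- A hierarchical ordering (society) on the finite set `S`: an (unordered) set partition of `S`
into nonempty blocks, together with an ordered set partition of each block. -/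
def HierarchicalOrdering {α : Type*} [DecidableEq α] (S : Finset α) :=
  (P : Finpartition S) × ((b : P.parts) → OrderedSetPartition (b : Finset α))

/-- `H n`: the number of hierarchical orderings on an `n`-element set. -/
noncomputable def hier (n : ℕ) : ℕ :=
  Nat.card (HierarchicalOrdering (Finset.univ : Finset (Fin n)))


/-- The Stirling number of the second kind `S(n,k)`: the number of partitions of an
`n`-element set into `k` nonempty blocks. -/
noncomputable def stirling2 (n k : ℕ) : ℕ :=
  Nat.card {P : Finpartition (Finset.univ : Finset (Fin n)) // P.parts.card = k}

/-!
An ordered set partition is the same thing as a set partition `P` together with a listing of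
its blocks. Fix `P` with `i` blocks. A listing with `x` in its `r`-th block must put the block
`P.part x` in position `r`, and is then determined by a listing of the other `i - 1` blocks
(insert or erase `P.part x` at position `r`). So `P` contributes `n · (i - 1)!` pairs when
`r ≤ i` and none otherwise; grouping the partitions by their number of blocks gives the sum.
-/

namespace List
variable {α : Type*}

theorem length_eq_card_of_coe_eq_val {l : List α} {F : Finset α}
    (hl : (l : Multiset α) = F.val) : l.length = #F := by
  rw [← Multiset.coe_card, hl, Finset.card_val]

theorem coe_insertIdx {l : List α} {j : ℕ} (hj : j ≤ l.length) (b : α) :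
    (l.insertIdx j b : Multiset α) = b ::ₘ l :=
  Multiset.coe_eq_coe.mpr (perm_insertIdx b l hj)

theorem coe_eraseIdx_of_getElem?_eq [DecidableEq α] {l : List α} {j : ℕ} {b : α}
    (h : l[j]? = some b) : (l.eraseIdx j : Multiset α) = (l : Multiset α).erase b := by
  obtain ⟨hj, rfl⟩ := getElem?_eq_some_iff.mp h
  rw [← Multiset.coe_eq_coe.mpr (getElem_cons_eraseIdx_perm hj), ← Multiset.cons_coe,
    Multiset.erase_cons_head]

theorem insertIdx_eraseIdx_of_getElem?_eq {l : List α} {j : ℕ} {b : α}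
    (h : l[j]? = some b) : (l.eraseIdx j).insertIdx j b = l := by
  obtain ⟨hj, rfl⟩ := getElem?_eq_some_iff.mp h
  exact insertIdx_eraseIdx_getElem hj

end List

section ListsOfMultiset
variable {α : Type*} [DecidableEq α]

def Multiset.listsCoeEqEquiv (m : Multiset α) :
    {l : List α // (l : Multiset α) = m} ≃ (Multiset.lists m).toFinset :=
  Equiv.subtypeEquivRight fun l => by simp [eq_comm]

instance (m : Multiset α) (p : List α → Prop) :
    Finite {l : List α // (l : Multiset α) = m ∧ p l} :=
  .of_injective (fun l => Multiset.listsCoeEqEquiv m ⟨l.1, l.2.1⟩) fun _ _ h =>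
    Subtype.ext <| by simpa using (Multiset.listsCoeEqEquiv m).injective h

theorem card_lists_coe_eq_val (F : Finset α) :
    Nat.card {l : List α // (l : Multiset α) = F.val} = (#F)! := by
  rw [Nat.card_congr (Multiset.listsCoeEqEquiv F.val), Nat.card_eq_fintype_card,
    Fintype.card_coe, Multiset.toFinset_card_of_nodup (Multiset.lists_nodup_finset F),
    ← F.coe_toList, Multiset.lists_coe, Multiset.coe_card, List.length_permutations,
    F.length_toList]

def insertIdxEquiv {F : Finset α} {b : α} (hb : b ∈ F) {j : ℕ} (hj : j < #F) :
    {l : List α // (l : Multiset α) = (F.erase b).val} ≃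
      {l : List α // (l : Multiset α) = F.val ∧ l[j]? = some b} where
  toFun l :=
    have hj' : j ≤ l.1.length := by
      rw [List.length_eq_card_of_coe_eq_val l.2, card_erase_of_mem hb]; omega
    ⟨l.1.insertIdx j b, by rw [List.coe_insertIdx hj', l.2, erase_val, Multiset.cons_erase hb],
      by simp [List.getElem?_insertIdx_self, hj']⟩
  invFun l := ⟨l.1.eraseIdx j, by rw [List.coe_eraseIdx_of_getElem?_eq l.2.2, l.2.1, erase_val]⟩
  left_inv l := Subtype.ext (List.eraseIdx_insertIdx_self _)
  right_inv l := Subtype.ext (List.insertIdx_eraseIdx_of_getElem?_eq l.2.2)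

theorem card_lists_coe_eq_val_getElem?_eq (F : Finset α) {b : α} (hb : b ∈ F) (j : ℕ) :
    Nat.card {l : List α // (l : Multiset α) = F.val ∧ l[j]? = some b} =
      if j < #F then (#F - 1)! else 0 := by
  split_ifs with hj
  · rw [← Nat.card_congr (insertIdxEquiv hb hj), card_lists_coe_eq_val, card_erase_of_mem hb]
  · have : IsEmpty {l : List α // (l : Multiset α) = F.val ∧ l[j]? = some b} :=
      ⟨fun l => hj <| List.length_eq_card_of_coe_eq_val l.2.1 ▸
        (List.getElem?_eq_some_iff.mp l.2.2).1⟩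
    exact Nat.card_of_isEmpty

end ListsOfMultiset

namespace IsOrderedSetPartition
variable {α : Type*} [DecidableEq α] {S : Finset α} {L : List (Finset α)}

theorem nodup (h : IsOrderedSetPartition S L) : L.Nodup :=
  h.2.1.imp_of_mem fun ha _ hab heq => h.1 _ ha (by subst heq; simpa using hab)

def toFinpartition (h : IsOrderedSetPartition S L) : Finpartition S where
  parts := ⟨L, h.nodup⟩
  supIndep := supIndep_iff_pairwiseDisjoint.mpr fun _ ha _ hb hab => h.2.1.forall ha hb hab
  sup_parts := by rw [sup_def, Multiset.map_id, Multiset.sup_coe]; exact h.2.2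
  bot_notMem hbot := h.1 ∅ hbot rfl

theorem of_coe_eq_parts (P : Finpartition S) (hL : (L : Multiset (Finset α)) = P.parts.val) :
    IsOrderedSetPartition S L := by
  have mem_parts {T} (hT : T ∈ L) : T ∈ P.parts := by
    rw [← Finset.mem_val, ← hL]; exact hT
  refine ⟨fun T hT => P.ne_bot (mem_parts hT), ?_, ?_⟩
  · exact (Multiset.coe_nodup.mp (hL ▸ P.parts.nodup)).pairwise_of_forall_ne
      fun _ ha _ hb hab => P.disjoint (mem_parts ha) (mem_parts hb) hab
  · rw [← P.sup_parts, sup_def, Multiset.map_id, ← hL, Multiset.sup_coe]; rfl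

end IsOrderedSetPartition

namespace Finpartition
variable {α : Type*} [DecidableEq α] {S : Finset α} (P : Finpartition S)

theorem mem_getD_iff_getElem?_eq_part {L : List (Finset α)}
    (hL : (L : Multiset (Finset α)) = P.parts.val) (j : ℕ) {x : α} :
    x ∈ L.getD j ∅ ↔ x ∈ S ∧ L[j]? = some (P.part x) := by
  rw [List.getD_eq_getElem?_getD]
  cases h : L[j]? with
  | none => simp
  | some T =>
    have hT : T ∈ P.parts := by rw [← mem_val, ← hL]; exact List.mem_of_getElem? h
    simp only [Option.getD_some, Option.some_inj, eq_comm (a := T), P.part_eq_iff_mem hT,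
      iff_and_self]
    exact fun hx => P.le hT hx

def fiberEquivSigmaPart (j : ℕ) :
    {p : {p : OrderedSetPartition S × α // p.2 ∈ p.1.1.getD j ∅} //
        p.1.1.2.toFinpartition = P} ≃
      Σ x : S, {L : List (Finset α) //
        (L : Multiset (Finset α)) = P.parts.val ∧ L[j]? = some (P.part x)} where
  toFun p :=
    have hL : (p.1.1.1.1 : Multiset (Finset α)) = P.parts.val := congrArg (·.parts.val) p.2
    have hx := (P.mem_getD_iff_getElem?_eq_part hL j).mp p.1.2
    ⟨⟨p.1.1.2, hx.1⟩, p.1.1.1.1, hL, hx.2⟩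
  invFun s :=
    ⟨⟨(⟨s.2.1, .of_coe_eq_parts P s.2.2.1⟩, s.1.1),
      (P.mem_getD_iff_getElem?_eq_part s.2.2.1 j).mpr ⟨s.1.2, s.2.2.2⟩⟩,
      Finpartition.ext (val_inj.mp s.2.2.1)⟩
  left_inv _ := rfl
  right_inv _ := rfl

theorem card_mem_getD_fiber (j : ℕ) :
    Nat.card {p : {p : OrderedSetPartition S × α // p.2 ∈ p.1.1.getD j ∅} //
        p.1.1.2.toFinpartition = P} =
      if j < #P.parts then #S * (#P.parts - 1)! else 0 := by
  rw [Nat.card_congr (P.fiberEquivSigmaPart j), Nat.card_sigma]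
  simp_rw [card_lists_coe_eq_val_getElem?_eq _ (P.part_mem.mpr (Subtype.prop _))]
  split_ifs <;> simp

end Finpartition

theorem card_orderedSetPartition_mem_getD {α : Type*} [DecidableEq α] (S : Finset α) (j : ℕ) :
    Nat.card {p : OrderedSetPartition S × α // p.2 ∈ p.1.1.getD j ∅} =
      #S * ∑ i ∈ Icc (j + 1) #S, (i - 1)! * #{P : Finpartition S | #P.parts = i} := by
  have fiber_finite (P : Finpartition S) := Finite.of_equiv _ (P.fiberEquivSigmaPart j).symm
  rw [← Nat.card_congr (Equiv.sigmaFiberEquiv fun p => p.1.1.2.toFinpartition), Nat.card_sigma]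
  simp_rw [Finpartition.card_mem_getD_fiber, ← sum_filter]
  have maps_to (P) (hP : P ∈ ({P | j < #P.parts} : Finset (Finpartition S))) :
      #P.parts ∈ Icc (j + 1) #S :=
    mem_Icc.mpr ⟨(mem_filter.mp hP).2, P.card_parts_le_card⟩
  rw [← sum_fiberwise_of_maps_to maps_to, mul_sum]
  refine sum_congr rfl fun i hi => ?_
  rw [filter_filter, sum_congr rfl fun P hP => by rw [(mem_filter.mp hP).2.2], sum_const,
    smul_eq_mul, filter_congr fun P _ => and_iff_right_of_imp fun h => h ▸ (mem_Icc.mp hi).1]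
  ring

theorem rank_count_labeled_general (n r : ℕ) (hr : 1 ≤ r) :
    Nat.card {p : OrderedSetPartition (Finset.univ : Finset (Fin n)) × Fin n //
        p.2 ∈ p.1.1.getD (r - 1) ∅} =
      n * ∑ i ∈ Finset.Icc r n, (i - 1)! * stirling2 n i := by
  rw [card_orderedSetPartition_mem_getD, Nat.sub_add_cancel hr, Finset.card_fin]
  simp only [stirling2, Nat.card_eq_fintype_card, Fintype.card_subtype]

/-- **Rank distribution in a random hierarchy (labeled case).** For `1 ≤ r ≤ n`, the number
of pairs `(X, x)` where `X` is an ordered set partition of an `n`-element set and `x` is an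
element of its `r`-th block equals `n·∑_{i=r}^{n} (i−1)!·S(n,i)`.  (Blocks are indexed from
`1`, so the `r`-th block is entry `r−1` of the list; membership in `getD (r-1) ∅` forces the
height to be at least `r`.) -/
theorem rank_count_labeled (n r : ℕ) (hr : 1 ≤ r) (hrn : r ≤ n) :
    Nat.card {p : OrderedSetPartition (Finset.univ : Finset (Fin n)) × Fin n //
        p.2 ∈ p.1.1.getD (r - 1) ∅} =
      n * ∑ i ∈ Finset.Icc r n, (i - 1)! * stirling2 n i :=
  rank_count_labeled_general n r hr
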